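/- arXiv:2602.01133 — 5 statements merged into one kernel-verified Lean document; each statement's English description precedes it below -/
import Mathlib

section
/- The LIF neuron with hard reset has Δ-short control for every Δ: if H_{t-Δ} ≥ V_th and the inputs X_{t-Δ+1}, …, X_t are all strictly less than V_th/Δ, then H_t < V_th. -/
theorem stmt_4 (Vth β : ℝ) (hVth : 0 < Vth) (hβ0 : 0 < β) (hβ1 : β < 1)
    (Δ : ℕ) (hΔ : 0 < Δ)
    (X H : ℕ → ℝ) (hX : ∀ t, 0 ≤ X t)
    (hrec : ∀ t, H (t + 1) =
      β * (1 - (if Vth ≤ H t then (1 : ℝ) else 0)) * H t + (1 - β) * X (t + 1))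
    (s : ℕ) (hfire : Vth ≤ H s)
    (hin : ∀ i, 1 ≤ i → i ≤ Δ → X (s + i) < Vth / Δ) :
    H (s + Δ) < Vth := by
  set a := Vth / Δ with ha
  have haΔ : (Δ : ℝ) > 0 := by exact_mod_cast hΔ
  have ha0 : 0 < a := div_pos hVth haΔ
  have key : ∀ i, 1 ≤ i → i ≤ Δ → 0 ≤ H (s + i) ∧ H (s + i) < i * a := by
    intro i
    induction i with
    | zero => omega
    | succ n ih =>
      intro _ hle
      rcases Nat.eq_zero_or_pos n with hn | hn
      · subst hn
        have h1 : H (s + 1) = (1 - β) * X (s + 1) := by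
          have := hrec s
          rw [if_pos hfire] at this
          simpa using this
        have hx := hin 1 le_rfl hle
        constructor
        · rw [h1]; exact mul_nonneg (by linarith) (hX _)
        · rw [h1]
          push_cast
          calc (1 - β) * X (s + 1) ≤ 1 * X (s + 1) := by
                have := hX (s + 1); nlinarith
            _ < 1 * a := by simpa using hx
      · have ⟨h0, hlt⟩ := ih hn (by omega)
        have hna : (n : ℝ) * a ≤ (Δ : ℝ) * a := by
          have : (n : ℝ) ≤ Δ := by exact_mod_cast (by omega : n ≤ Δ)
          nlinarith
        have hHlt : H (s + n) < Vth := by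
          have : (Δ : ℝ) * a = Vth := by rw [ha]; field_simp [haΔ.ne']
          linarith
        have hrec' := hrec (s + n)
        rw [if_neg (not_le.mpr hHlt)] at hrec'
        have h1 : H (s + (n + 1)) = β * H (s + n) + (1 - β) * X (s + n + 1) := by
          rw [show s + (n + 1) = s + n + 1 by ring, hrec']; ring
        have hx := hin (n + 1) (by omega) hle
        rw [show s + (n + 1) = s + n + 1 by ring] at hx
        constructor
        · rw [h1]
          exact add_nonneg (mul_nonneg hβ0.le h0) (mul_nonneg (by linarith) (hX _))
        · rw [h1]
          have h2 : β * H (s + n) < β * (n * a) := by nlinarith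
          have h3 : (1 - β) * X (s + n + 1) ≤ (1 - β) * a :=
            mul_le_mul_of_nonneg_left hx.le (by linarith)
          have hn1 : (1 : ℝ) ≤ n := by exact_mod_cast hn
          push_cast
          nlinarith
  have := (key Δ hΔ le_rfl).2
  have hΔa : (Δ : ℝ) * a = Vth := by rw [ha]; field_simp [haΔ.ne']
  linarith
end

section
/- The IF neuron with soft reset fails Δ-short control: for any positive integer Δ, if the inputs X_{t-Δ+1}, …, X_t are all nonnegative and strictly less than V_th/Δ, and if H_{t-Δ} > (Δ+1)·V_th − (X_{t-Δ+1} + ⋯ + X_t), then H_s ≥ V_th for all s with t−Δ < s ≤ t; in particular H_t ≥ V_th. -/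
/-!
Each step of the soft-reset neuron loses at most `V_th`, so after `i` steps
`H (s + i) ≥ H s - i V_th + (X (s+1) + ⋯ + X (s+i))`. With the hypothesis on `H s` this leaves
`H (s + i) > (Δ + 1 - i) V_th - (X (s+i+1) + ⋯ + X (s+Δ))`, and each of the `Δ - i` remaining
inputs is below `V_th / Δ ≤ V_th`.
-/

open Finset

theorem Finset.sum_Icc_one_eq_add_sum_Ioc {M : Type*} [AddCommMonoid M] (f : ℕ → M) {i n : ℕ}
    (h : i ≤ n) : ∑ j ∈ Icc 1 n, f j = ∑ j ∈ Icc 1 i, f j + ∑ j ∈ Ioc i n, f j := by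
  have hIcc : ∀ m, Icc 1 m = Ioc 0 m := Icc_add_one_left_eq_Ioc 0
  rw [hIcc, hIcc]
  exact (sum_Ioc_consecutive f (Nat.zero_le i) h).symm

section SoftResetIF

variable {Vth : ℝ} {X H : ℕ → ℝ}
  (hrec : ∀ t, H (t + 1) = H t - Vth * (if Vth ≤ H t then (1 : ℝ) else 0) + X (t + 1))
include hrec

theorem softReset_sub_add_le (hVth : 0 ≤ Vth) (t : ℕ) : H t - Vth + X (t + 1) ≤ H (t + 1) := by
  have hreset : Vth * (if Vth ≤ H t then (1 : ℝ) else 0) ≤ Vth := by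
    split_ifs <;> linarith
  linarith [hrec t]

theorem softReset_sub_add_sum_le (hVth : 0 ≤ Vth) (s n : ℕ) :
    H s - n * Vth + ∑ j ∈ Icc 1 n, X (s + j) ≤ H (s + n) := by
  induction n with
  | zero => simp
  | succ n ih =>
    rw [sum_Icc_succ_top (by omega), Nat.cast_succ, ← Nat.add_assoc]
    linarith [softReset_sub_add_le hrec hVth (s + n)]

end SoftResetIF

theorem stmt_6_general (Vth : ℝ) (Δ : ℕ)
    (X H : ℕ → ℝ)
    (hrec : ∀ t, H (t + 1) = H t - Vth * (if Vth ≤ H t then (1 : ℝ) else 0) + X (t + 1))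
    (s : ℕ)
    (hin : ∀ i, 1 ≤ i → i ≤ Δ → 0 ≤ X (s + i) ∧ X (s + i) < Vth / Δ)
    (hbig : H s > ((Δ : ℝ) + 1) * Vth - ∑ i ∈ Finset.Icc 1 Δ, X (s + i)) :
    ∀ i, 1 ≤ i → i ≤ Δ → Vth ≤ H (s + i) := by
  intro i hi hiΔ
  have hΔ : (1 : ℝ) ≤ Δ := by exact_mod_cast hi.trans hiΔ
  have hVth : 0 ≤ Vth := by
    obtain ⟨hX₀, hX₁⟩ := hin i hi hiΔ
    exact ((div_pos_iff_of_pos_right (by linarith)).mp (hX₀.trans_lt hX₁)).le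
  have htail : ∑ j ∈ Ioc i Δ, X (s + j) ≤ ((Δ : ℝ) - i) * Vth := by
    have hle := sum_le_card_nsmul (Ioc i Δ) (fun j ↦ X (s + j)) Vth fun j hj ↦ by
      rw [mem_Ioc] at hj
      exact (hin j (by omega) hj.2).2.le.trans (div_le_self hVth hΔ)
    rwa [Nat.card_Ioc, nsmul_eq_mul, Nat.cast_sub hiΔ] at hle
  have hlow := softReset_sub_add_sum_le hrec hVth s i
  rw [sum_Icc_one_eq_add_sum_Ioc _ hiΔ] at hbig
  linarith

theorem stmt_6 (Vth : ℝ) (hVth : 0 < Vth) (Δ : ℕ) (hΔ : 0 < Δ)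
    (X H : ℕ → ℝ)
    (hrec : ∀ t, H (t + 1) = H t - Vth * (if Vth ≤ H t then (1 : ℝ) else 0) + X (t + 1))
    (s : ℕ)
    (hin : ∀ i, 1 ≤ i → i ≤ Δ → 0 ≤ X (s + i) ∧ X (s + i) < Vth / Δ)
    (hbig : H s > ((Δ : ℝ) + 1) * Vth - ∑ i ∈ Finset.Icc 1 Δ, X (s + i)) :
    ∀ i, 1 ≤ i → i ≤ Δ → Vth ≤ H (s + i) :=
  stmt_6_general Vth Δ X H hrec s hin hbig
end

section
/- The LIF neuron with soft reset has long control: if 0 ≤ X_t ≤ C for all t, then H_t ≤ C for all t. -/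
theorem stmt_8 (Vth β C : ℝ) (hVth : 0 < Vth) (hβ0 : 0 < β) (hβ1 : β < 1) (hC : 0 < C)
    (X H : ℕ → ℝ) (hX : ∀ t, 0 ≤ X t ∧ X t ≤ C)
    (hH1 : H 1 = (1 - β) * X 1)
    (hrec : ∀ t, 1 ≤ t → H (t + 1) =
      β * (H t - Vth * (if Vth ≤ H t then (1 : ℝ) else 0)) + (1 - β) * X (t + 1)) :
    ∀ t, 1 ≤ t → H t ≤ C := by
  intro t ht
  induction t with
  | zero => omega
  | succ n ih =>
    rcases Nat.eq_or_lt_of_le ht with h | h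
    · have hn1 : n + 1 = 1 := h.symm
      rw [hn1, hH1]
      calc (1 - β) * X 1 ≤ 1 * C := by
            apply mul_le_mul (by linarith) (hX 1).2 (hX 1).1 (by linarith)
        _ = C := one_mul C
    · have hn : 1 ≤ n := by omega
      have hHn := ih hn
      rw [hrec n hn]
      have hXb := (hX (n + 1)).2
      have hX0 := (hX (n + 1)).1
      split_ifs with hv
      · nlinarith
      · nlinarith
end

section
/- Dynamic decay can enforce 1-step short control: given Δ ≥ 1, suppose H_{t-Δ} ≥ V_th, the inputs X_{t-Δ+1}, …, X_t satisfy 0 ≤ X_s < V_th/Δ, and the first decay coefficient satisfies 0 ≤ α_{t-Δ+1} < (V_th − X_{t-Δ+1})/(H_{t-Δ} − X_{t-Δ+1}), while subsequent coefficients α_{t-Δ+2}, …, α_t lie in [0,1]. Then H_s < V_th for all s with t−Δ < s ≤ t; in particular H_t < V_th. -/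
theorem stmt_10 (Vth : ℝ) (hVth : 0 < Vth) (Δ : ℕ) (hΔ : 0 < Δ)
    (α X H : ℕ → ℝ)
    (hrec : ∀ u, H (u + 1) = α (u + 1) * H u + (1 - α (u + 1)) * X (u + 1))
    (s : ℕ) (hfire : Vth ≤ H s)
    (hin : ∀ i, 1 ≤ i → i ≤ Δ → 0 ≤ X (s + i) ∧ X (s + i) < Vth / Δ)
    (hα1 : 0 ≤ α (s + 1) ∧ α (s + 1) < (Vth - X (s + 1)) / (H s - X (s + 1)))
    (hα : ∀ i, 2 ≤ i → i ≤ Δ → 0 ≤ α (s + i) ∧ α (s + i) ≤ 1) :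
    ∀ i, 1 ≤ i → i ≤ Δ → H (s + i) < Vth := by
  have hΔR : (1 : ℝ) ≤ (Δ : ℕ) := Nat.one_le_cast.mpr hΔ
  have hΔpos : (0 : ℝ) < (Δ : ℝ) := by positivity
  have hVΔ : Vth / Δ ≤ Vth := by
    rw [div_le_iff₀ hΔpos]; nlinarith
  intro i
  induction i with
  | zero => omega
  | succ n ih =>
    intro h1 hle
    rcases Nat.lt_or_ge n 1 with hn | hn
    · -- n = 0
      have hn0 : n = 0 := by omega
      subst hn0
      obtain ⟨hX0, hX1⟩ := hin 1 le_rfl hle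
      have hXlt : X (s + 1) < Vth := lt_of_lt_of_le hX1 hVΔ
      have hpos : 0 < H s - X (s + 1) := by linarith
      have hkey : α (s + 1) * (H s - X (s + 1)) < Vth - X (s + 1) :=
        (lt_div_iff₀ hpos).mp hα1.2
      have hr := hrec s
      nlinarith
    · have hH := ih (by omega) (by omega)
      obtain ⟨hα0, hα1'⟩ := hα (n + 1) (by omega) hle
      obtain ⟨hX0, hX1⟩ := hin (n + 1) (by omega) hle
      have hr := hrec (s + n)
      have : s + n + 1 = s + (n + 1) := by omega
      rw [this] at hr
      have hXV : X (s + (n + 1)) < Vth := lt_of_lt_of_le hX1 hVΔ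
      nlinarith [mul_nonneg hα0 (sub_pos.mpr hH).le,
        mul_nonneg (by linarith : (0:ℝ) ≤ 1 - α (s + (n + 1))) (sub_pos.mpr hXV).le,
        mul_pos (sub_pos.mpr hH) (sub_pos.mpr hXV)]
end

section
/- Adaptive duration of influence: in the dynamic-decay neuron, given Δ ≥ 1 and 1 ≤ τ ≤ Δ, suppose H_{t-Δ} ≥ V_th, inputs X_{t-Δ+1}, …, X_t satisfy 0 ≤ X_s < V_th/Δ, coefficients satisfy α_{t-Δ+i} ≥ (V_th − X_{t-Δ+i})/(H_{t-Δ+i-1} − X_{t-Δ+i}) for i = 1, …, τ−1, α_{t-Δ+τ} < (V_th − X_{t-Δ+τ})/(H_{t-Δ+τ-1} − X_{t-Δ+τ}) with all α's in [0,1]. Then H_{t-Δ+i} ≥ V_th for i = 0, 1, …, τ−1 and H_{t-Δ+i} < V_th for i = τ, …, Δ. -/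
theorem stmt_18 (Vth : ℝ) (hVth : 0 < Vth) (Δ τ : ℕ) (hΔ : 0 < Δ) (hτ : 1 ≤ τ) (hτΔ : τ ≤ Δ)
    (α X H : ℕ → ℝ)
    (hrec : ∀ u, H (u + 1) = α (u + 1) * H u + (1 - α (u + 1)) * X (u + 1))
    (s : ℕ) (hfire : Vth ≤ H s)
    (hin : ∀ i, 1 ≤ i → i ≤ Δ → 0 ≤ X (s + i) ∧ X (s + i) < Vth / Δ)
    (hαmem : ∀ i, 1 ≤ i → i ≤ Δ → 0 ≤ α (s + i) ∧ α (s + i) ≤ 1)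
    (hαbig : ∀ i, 1 ≤ i → i ≤ τ - 1 →
      (Vth - X (s + i)) / (H (s + i - 1) - X (s + i)) ≤ α (s + i))
    (hαsmall : α (s + τ) < (Vth - X (s + τ)) / (H (s + τ - 1) - X (s + τ))) :
    (∀ i, i ≤ τ - 1 → Vth ≤ H (s + i)) ∧
      (∀ i, τ ≤ i → i ≤ Δ → H (s + i) < Vth) := by
  have hΔ1 : (1:ℝ) ≤ Δ := by exact_mod_cast hΔ
  have hXlt : ∀ i, 1 ≤ i → i ≤ Δ → X (s + i) < Vth := by
    intro i h1 h2
    have := (hin i h1 h2).2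
    have : Vth / Δ ≤ Vth := by
      rw [div_le_iff₀ (by linarith)]
      nlinarith
    linarith [(hin i h1 h2).2]
  -- Part 1
  have part1 : ∀ i, i ≤ τ - 1 → Vth ≤ H (s + i) := by
    intro i
    induction i with
    | zero => intro _; simpa using hfire
    | succ k ih =>
      intro hk
      have hk' : k ≤ τ - 1 := by omega
      have hprev : Vth ≤ H (s + k) := ih hk'
      have h1 : 1 ≤ k + 1 := by omega
      have h2 : k + 1 ≤ Δ := by omega
      have hXl : X (s + (k+1)) < Vth := hXlt (k+1) h1 h2
      have hpos : 0 < H (s + k) - X (s + (k+1)) := by linarith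
      have hbig := hαbig (k+1) h1 hk
      have hidx : s + (k+1) - 1 = s + k := by omega
      rw [hidx] at hbig
      have hle : Vth - X (s + (k+1)) ≤ α (s + (k+1)) * (H (s + k) - X (s + (k+1))) := by
        rw [div_le_iff₀ hpos] at hbig
        linarith
      have hrec' := hrec (s + k)
      have : s + k + 1 = s + (k + 1) := by omega
      rw [this] at hrec'
      nlinarith [hle, hrec']
  refine ⟨part1, ?_⟩
  -- base case at i = τ
  have base : H (s + τ) < Vth := by
    have hprev : Vth ≤ H (s + (τ - 1)) := part1 (τ - 1) le_rfl
    have hXl : X (s + τ) < Vth := hXlt τ hτ hτΔ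
    have hidx : s + τ - 1 = s + (τ - 1) := by omega
    rw [hidx] at hαsmall
    have hpos : 0 < H (s + (τ - 1)) - X (s + τ) := by linarith
    have hlt : α (s + τ) * (H (s + (τ - 1)) - X (s + τ)) < Vth - X (s + τ) := by
      rw [lt_div_iff₀ hpos] at hαsmall
      linarith
    have hrec' := hrec (s + (τ - 1))
    have h1 : s + (τ - 1) + 1 = s + τ := by omega
    rw [h1, ← hidx, hidx] at hrec'
    nlinarith [hlt, hrec']
  intro i hτi hiΔ
  induction i with
  | zero => omega
  | succ k ih =>
    rcases eq_or_lt_of_le hτi with heq | hlt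
    · rw [← heq]; exact base
    · have hk : τ ≤ k := by omega
      have hkΔ : k ≤ Δ := by omega
      have hprev : H (s + k) < Vth := ih hk hkΔ
      have h1 : 1 ≤ k + 1 := by omega
      have hX0 := (hin (k+1) h1 hiΔ).1
      have hXl : X (s + (k+1)) < Vth := hXlt (k+1) h1 hiΔ
      have hα := hαmem (k+1) h1 hiΔ
      have hrec' := hrec (s + k)
      have he : s + k + 1 = s + (k + 1) := by omega
      rw [he] at hrec'
      rcases eq_or_lt_of_le hα.1 with h0 | h0
      · rw [hrec', ← h0]; simpa using hXl
      · nlinarith [hrec', hα.2]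
end
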